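/- arXiv:2602.13373 — 2 statements merged into one kernel-verified Lean document; each statement's English description precedes it below -/
import Mathlib

section
/- Let N ≥ 1, ζ = exp(2πi/N), and fix k, n, m ∈ ZMod N. For x : ZMod N → ℂ, let x' be the vector (x')_j = ζ^m · ζ^{nj} · x_{j+k} (the action of the Heisenberg group element (k, n, m)). Then for all i, j ∈ ZMod N, B^M(x')(i,j) = B^M(x)(i,j) and B^{FM}(x')(i,j) = B^{FM}(x)(i,j). That is, the Heisenberg bispectrum B^H = (B^M, B^{FM}) is invariant under the Heisenberg group action. -/
open ZMod

/-- `ζ = exp(2πi/N)`, the standard primitive `N`-th root of unity. -/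
noncomputable def heisZeta (N : ℕ) : ℂ :=
  Complex.exp (2 * (Real.pi : ℂ) * Complex.I / (N : ℂ))

/-- The modulus bispectrum `B^M(x)(i,j) = ŷ[i]·ŷ[j]·ŷ[-i-j]` where `y_t = |x_t|²`. -/
noncomputable def modulusBispectrum {N : ℕ} [NeZero N] (x : ZMod N → ℂ) (i j : ZMod N) : ℂ :=
  dft (fun t => ((‖x t‖ : ℂ)) ^ 2) i *
    dft (fun t => ((‖x t‖ : ℂ)) ^ 2) j *
    dft (fun t => ((‖x t‖ : ℂ)) ^ 2) (-i - j)

/-- The Fourier-modulus bispectrum `B^{FM}(x)(i,j) = ẑ[i]·ẑ[j]·ẑ[-i-j]` where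
`z_t = |x̂[t]|²`. -/
noncomputable def fourierModulusBispectrum {N : ℕ} [NeZero N] (x : ZMod N → ℂ)
    (i j : ZMod N) : ℂ :=
  dft (fun t => ((‖dft x t‖ : ℂ)) ^ 2) i *
    dft (fun t => ((‖dft x t‖ : ℂ)) ^ 2) j *
    dft (fun t => ((‖dft x t‖ : ℂ)) ^ 2) (-i - j)


/-! Translating a signal by `k` multiplies `𝓕 Φ s` by the phase `stdAddChar (k * s)`, and the three
phases in a bispectrum cancel because `i + j + (-i - j) = 0`. The Heisenberg element `(k, n, m)`
only multiplies `x` by unimodular phases after translating it by `k`, so `|x'|²` is a translate of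
`|x|²`; on the Fourier side modulation by `n` becomes translation by `-n`, so `|𝓕 x'|²` is a
translate of `|𝓕 x|²`. -/

namespace ZMod

variable {N : ℕ} [NeZero N] {E : Type*} [AddCommGroup E] [Module ℂ E]

lemma dft_comp_add_right (Φ : ZMod N → E) (k s : ZMod N) :
    𝓕 (fun t ↦ Φ (t + k)) s = stdAddChar (k * s) • 𝓕 Φ s := by
  rw [dft_apply, dft_apply, Finset.smul_sum]
  refine Fintype.sum_equiv (Equiv.addRight k) _ _ fun t ↦ ?_
  rw [Equiv.coe_addRight, smul_smul, ← AddChar.map_add_eq_mul]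
  ring_nf

lemma dft_stdAddChar_mul_smul (Φ : ZMod N → E) (n s : ZMod N) :
    𝓕 (fun t ↦ stdAddChar (n * t) • Φ t) s = 𝓕 Φ (s - n) := by
  simp only [dft_apply, smul_smul, ← AddChar.map_add_eq_mul]
  refine Finset.sum_congr rfl fun t _ ↦ ?_
  ring_nf

end ZMod

section

variable {N : ℕ} [NeZero N]

/-- `modulusBispectrum x` and `fourierModulusBispectrum x` are, by `rfl`, the bispectra of
`|x|²` and of `|𝓕 x|²`. -/
noncomputable def bispectrum (Φ : ZMod N → ℂ) (i j : ZMod N) : ℂ :=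
  𝓕 Φ i * 𝓕 Φ j * 𝓕 Φ (-i - j)

lemma bispectrum_comp_add_right (Φ : ZMod N → ℂ) (k : ZMod N) :
    bispectrum (fun t ↦ Φ (t + k)) = bispectrum Φ := by
  ext i j
  have hphase :
      stdAddChar (k * i) * stdAddChar (k * j) * stdAddChar (k * (-i - j)) = (1 : ℂ) := by
    rw [← AddChar.map_add_eq_mul, ← AddChar.map_add_eq_mul]
    convert AddChar.map_zero_eq_one _ using 2
    ring
  simp only [bispectrum, dft_comp_add_right, smul_eq_mul]
  linear_combination (𝓕 Φ i * 𝓕 Φ j * 𝓕 Φ (-i - j)) * hphase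

noncomputable def heisAction (k n m : ZMod N) (x : ZMod N → ℂ) : ZMod N → ℂ :=
  fun t ↦ heisZeta N ^ m.val * heisZeta N ^ (n * t).val * x (t + k)

lemma heisZeta_pow_val (a : ZMod N) : heisZeta N ^ a.val = stdAddChar a := by
  rw [heisZeta, stdAddChar_apply, toCircle_apply, ← Complex.exp_nat_mul]
  ring_nf

lemma heisAction_apply (k n m : ZMod N) (x : ZMod N → ℂ) (t : ZMod N) :
    heisAction k n m x t = stdAddChar m * (stdAddChar (n * t) * x (t + k)) := by
  rw [heisAction, heisZeta_pow_val, heisZeta_pow_val, mul_assoc]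

lemma norm_heisAction_apply (k n m : ZMod N) (x : ZMod N → ℂ) (t : ZMod N) :
    ‖heisAction k n m x t‖ = ‖x (t + k)‖ := by
  simp only [heisAction_apply, norm_mul, AddChar.norm_apply, one_mul]

lemma dft_heisAction (k n m : ZMod N) (x : ZMod N → ℂ) (s : ZMod N) :
    𝓕 (heisAction k n m x) s = stdAddChar m * (stdAddChar (k * (s - n)) * 𝓕 x (s - n)) := by
  have hx : heisAction k n m x = fun t ↦ stdAddChar m * (stdAddChar (n * t) • x (t + k)) :=
    funext (heisAction_apply k n m x)
  rw [hx, dft_const_mul]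
  beta_reduce
  rw [dft_stdAddChar_mul_smul (fun t ↦ x (t + k)), dft_comp_add_right, smul_eq_mul]

lemma norm_dft_heisAction (k n m : ZMod N) (x : ZMod N → ℂ) (s : ZMod N) :
    ‖𝓕 (heisAction k n m x) s‖ = ‖𝓕 x (s + -n)‖ := by
  simp only [dft_heisAction, norm_mul, AddChar.norm_apply, one_mul, sub_eq_add_neg]

lemma modulusBispectrum_heisAction (k n m : ZMod N) (x : ZMod N → ℂ) :
    modulusBispectrum (heisAction k n m x) = modulusBispectrum x := by
  change bispectrum (fun t ↦ (‖heisAction k n m x t‖ : ℂ) ^ 2)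
    = bispectrum (fun t ↦ (‖x t‖ : ℂ) ^ 2)
  simp only [norm_heisAction_apply]
  exact bispectrum_comp_add_right (fun t ↦ (‖x t‖ : ℂ) ^ 2) k

lemma fourierModulusBispectrum_heisAction (k n m : ZMod N) (x : ZMod N → ℂ) :
    fourierModulusBispectrum (heisAction k n m x) = fourierModulusBispectrum x := by
  change bispectrum (fun t ↦ (‖𝓕 (heisAction k n m x) t‖ : ℂ) ^ 2)
    = bispectrum (fun t ↦ (‖𝓕 x t‖ : ℂ) ^ 2)
  simp only [norm_dft_heisAction]
  exact bispectrum_comp_add_right (fun t ↦ (‖𝓕 x t‖ : ℂ) ^ 2) (-n)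

end

/-- **The Heisenberg bispectrum is invariant under the Heisenberg group action.**
For the Heisenberg group element `(k, n, m)` acting by
`((k,n,m)·x)_j = ζ^m · ζ^{nj} · x_{j+k}`, both the modulus bispectrum and the
Fourier-modulus bispectrum are unchanged. -/
theorem heisenberg_bispectrum_invariant
    {N : ℕ} [NeZero N] (k n m : ZMod N) (x : ZMod N → ℂ) (i j : ZMod N) :
    modulusBispectrum (fun t => heisZeta N ^ m.val * heisZeta N ^ (n * t).val * x (t + k)) i j
        = modulusBispectrum x i j ∧
      fourierModulusBispectrum
          (fun t => heisZeta N ^ m.val * heisZeta N ^ (n * t).val * x (t + k)) i j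
        = fourierModulusBispectrum x i j :=
  ⟨congrFun₂ (modulusBispectrum_heisAction k n m x) i j,
    congrFun₂ (fourierModulusBispectrum_heisAction k n m x) i j⟩
end

section
/- Let N ≥ 1 and ζ = exp(2πi/N). Let x : ZMod N → ℂ, define y_j = |x_j|² and z_k = |x̂[k]|², and assume ŷ[k] ≠ 0 and ẑ[k] ≠ 0 for all k ∈ ZMod N. Assume furthermore that x has the phase-retrieval property: for every u : ZMod N → ℂ with |u_j| = |x_j| for all j and |û[k]| = |x̂[k]| for all k, there exists λ ∈ ℂ with |λ| = 1 and u = λ·x. If x' : ZMod N → ℂ satisfies B^M(x') = B^M(x) and B^{FM}(x') = B^{FM}(x) (as functions of (i,j)), then there exist λ ∈ ℂ with |λ| = 1 and k₀, n₀ ∈ ZMod N such that x'_j = λ·ζ^{n₀ j}·x_{j+k₀} for all j. That is, the Heisenberg bispectrum determines the Heisenberg orbit up to a global phase. -/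
/-!
If two signals `f`, `g` with the same sum have the same bispectrum and `f̂` never vanishes, the
ratio `r = ĝ / f̂` satisfies `r 0 = 1` and `r i * r j * r (-i - j) = 1`, so it is an additive
character `k ↦ ζ^{ak}` of `ZMod N`; hence `g` is the translate `f (· + a)`. For real signals the
sums agree automatically: their cubes are the equal values `bispectrum · 0 0`. Applied to `|x|²` and
`|x̂|²` this gives `|x'_j| = |x_{j+k₀}|` and `|x̂'_k| = |x̂_{k+m₀}|`. The Heisenberg translate
`u_j = ζ^{m₀ j} x'_{j-k₀}` then has the magnitudes and Fourier magnitudes of `x`, so phase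
retrieval gives `u = λ x`, and undoing the translation gives the claim.
-/

open ZMod

lemma map_add_of_mul_mul_eq_one {G M : Type*} [AddCommGroup G] [CommMonoid M] {r : G → M}
    (h0 : r 0 = 1) (h : ∀ i j, r i * r j * r (-i - j) = 1) (i j : G) :
    r (i + j) = r i * r j :=
  calc r (i + j) = r (i + j) * (r i * r j * r (-i - j)) := by rw [h i j, mul_one]
    _ = r i * r j * (r (i + j) * r 0 * r (-(i + j) - 0)) := by
      rw [h0, mul_one, sub_zero, neg_add']; ac_rfl
    _ = r i * r j := by rw [h, mul_one]

namespace ZMod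

variable {N : ℕ} [NeZero N]

lemma stdAddChar_eq_heisZeta_pow_val (a : ZMod N) : stdAddChar a = heisZeta N ^ a.val := by
  conv_lhs => rw [← ZMod.natCast_zmod_val a, ← Int.cast_natCast]
  rw [ZMod.stdAddChar_coe, heisZeta, ← Complex.exp_nat_mul]
  push_cast
  ring_nf

lemma norm_stdAddChar (a : ZMod N) : ‖stdAddChar a‖ = 1 :=
  Circle.norm_coe _

lemma exists_eq_mulShift_stdAddChar (ψ : AddChar (ZMod N) ℂ) :
    ∃ a, stdAddChar.mulShift a = ψ :=
  ((Fintype.bijective_iff_injective_and_card _).2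
    ⟨AddChar.to_mulShift_inj_of_isPrimitive (isPrimitive_stdAddChar N),
      AddChar.card_eq.symm⟩).2 ψ


lemma dft_comp_add_right_s13 (f : ZMod N → ℂ) (a k : ZMod N) :
    dft (fun j => f (j + a)) k = stdAddChar (a * k) * dft f k := by
  rw [dft_apply, dft_apply, Finset.mul_sum]
  refine Fintype.sum_equiv (Equiv.addRight a) _ _ fun j => ?_
  simp only [Equiv.coe_addRight, smul_eq_mul, ← mul_assoc, ← AddChar.map_add_eq_mul]
  congr 2
  ring

lemma dft_stdAddChar_mul (a : ZMod N) (f : ZMod N → ℂ) (k : ZMod N) :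
    dft (fun j => stdAddChar (a * j) * f j) k = dft f (k - a) := by
  rw [dft_apply, dft_apply]
  refine Finset.sum_congr rfl fun j _ => ?_
  simp only [smul_eq_mul, ← mul_assoc, ← AddChar.map_add_eq_mul]
  congr 2
  ring

/-- The action of `(k, n, 0) ∈ H_N` on `ℂ^N`. -/
noncomputable def heisTranslate (k n : ZMod N) (f : ZMod N → ℂ) : ZMod N → ℂ :=
  fun j => stdAddChar (n * j) * f (j + k)

lemma norm_heisTranslate_apply (k n : ZMod N) (f : ZMod N → ℂ) (j : ZMod N) :
    ‖heisTranslate k n f j‖ = ‖f (j + k)‖ := by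
  rw [heisTranslate, norm_mul, norm_stdAddChar, one_mul]

lemma dft_heisTranslate (k n : ZMod N) (f : ZMod N → ℂ) (m : ZMod N) :
    dft (heisTranslate k n f) m = stdAddChar (k * (m - n)) * dft f (m - n) :=
  (dft_stdAddChar_mul n (fun j => f (j + k)) m).trans (dft_comp_add_right_s13 f k (m - n))

lemma norm_dft_heisTranslate (k n : ZMod N) (f : ZMod N → ℂ) (m : ZMod N) :
    ‖dft (heisTranslate k n f) m‖ = ‖dft f (m - n)‖ := by
  rw [dft_heisTranslate, norm_mul, norm_stdAddChar, one_mul]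

lemma heisTranslate_heisTranslate (k n k' n' : ZMod N) (f : ZMod N → ℂ) :
    heisTranslate k n (heisTranslate k' n' f) =
      stdAddChar (n' * k) • heisTranslate (k + k') (n + n') f := by
  ext j
  simp only [heisTranslate, Pi.smul_apply, smul_eq_mul, ← mul_assoc, ← AddChar.map_add_eq_mul]
  congr 2 <;> ring

lemma heisTranslate_heisTranslate_neg (k n : ZMod N) (f : ZMod N → ℂ) :
    heisTranslate k (-n) (heisTranslate (-k) n f) = stdAddChar (n * k) • f := by
  rw [heisTranslate_heisTranslate, add_neg_cancel, neg_add_cancel]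
  ext j
  simp [heisTranslate]

/-- `modulusBispectrum x` and `fourierModulusBispectrum x` are, by definition, the bispectra of
`|x|²` and `|x̂|²`. -/
noncomputable def bispectrum (f : ZMod N → ℂ) (i j : ZMod N) : ℂ :=
  dft f i * dft f j * dft f (-i - j)

theorem exists_dft_eq_stdAddChar_mul_of_bispectrum_eq {f g : ZMod N → ℂ}
    (hf : ∀ k, dft f k ≠ 0) (h : bispectrum g = bispectrum f) (h0 : dft g 0 = dft f 0) :
    ∃ a, ∀ k, dft g k = stdAddChar (a * k) * dft f k := by
  set r : ZMod N → ℂ := fun k => dft g k / dft f k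
  have hr0 : r 0 = 1 := by simp only [r, h0, div_self (hf 0)]
  have hr (i j : ZMod N) : r i * r j * r (-i - j) = 1 := by
    simp only [r, div_mul_div_comm]
    exact div_eq_one_iff_eq (mul_ne_zero (mul_ne_zero (hf i) (hf j)) (hf _)) |>.2
      (congrFun₂ h i j)
  obtain ⟨a, ha⟩ := exists_eq_mulShift_stdAddChar
    { toFun := r, map_zero_eq_one' := hr0, map_add_eq_mul' := map_add_of_mul_mul_eq_one hr0 hr }
  refine ⟨a, fun k => ?_⟩
  have hk : stdAddChar (a * k) = dft g k / dft f k := DFunLike.congr_fun ha k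
  rw [hk, div_mul_cancel₀ _ (hf k)]

theorem exists_eq_comp_add_of_bispectrum_eq {f g : ZMod N → ℂ}
    (hf : ∀ k, dft f k ≠ 0) (h : bispectrum g = bispectrum f) (h0 : dft g 0 = dft f 0) :
    ∃ a, g = fun j => f (j + a) := by
  obtain ⟨a, ha⟩ := exists_dft_eq_stdAddChar_mul_of_bispectrum_eq hf h h0
  exact ⟨a, dft.injective <| funext fun k => by rw [ha, dft_comp_add_right_s13]⟩

theorem exists_eq_comp_add_of_bispectrum_eq_of_real {f g : ZMod N → ℝ}
    (hf : ∀ k, dft (fun j => (f j : ℂ)) k ≠ 0)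
    (h : bispectrum (fun j => (g j : ℂ)) = bispectrum (fun j => (f j : ℂ))) :
    ∃ a, g = fun j => f (j + a) := by
  have h0 : dft (fun j => (g j : ℂ)) 0 = dft (fun j => (f j : ℂ)) 0 := by
    have hcube := congrFun₂ h 0 0
    simp only [bispectrum, neg_zero, sub_zero, dft_apply_zero, ← Complex.ofReal_sum,
      ← Complex.ofReal_mul, Complex.ofReal_inj] at hcube ⊢
    exact (Odd.pow_inj (n := 3) (by decide)).1 (by linear_combination hcube)
  obtain ⟨a, ha⟩ := exists_eq_comp_add_of_bispectrum_eq hf h h0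
  exact ⟨a, funext fun j => Complex.ofReal_injective (congrFun ha j)⟩

theorem exists_norm_eq_comp_add_of_bispectrum_eq {u v : ZMod N → ℂ}
    (hu : ∀ k, dft (fun t => (‖u t‖ : ℂ) ^ 2) k ≠ 0)
    (h : bispectrum (fun t => (‖v t‖ : ℂ) ^ 2) = bispectrum (fun t => (‖u t‖ : ℂ) ^ 2)) :
    ∃ a, ∀ j, ‖v j‖ = ‖u (j + a)‖ := by
  obtain ⟨a, ha⟩ := exists_eq_comp_add_of_bispectrum_eq_of_real
    (f := fun t => ‖u t‖ ^ 2) (g := fun t => ‖v t‖ ^ 2) (by simpa using hu) (by simpa using h)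
  exact ⟨a, fun j => (pow_left_inj₀ (norm_nonneg _) (norm_nonneg _) two_ne_zero).1
    (congrFun ha j)⟩

end ZMod

/-- **The Heisenberg bispectrum determines the Heisenberg orbit up to a global phase.**
Suppose `x` has nonvanishing `ŷ` and `ẑ` and satisfies the phase-retrieval property:
any vector with the same magnitudes and Fourier magnitudes as `x` is a unimodular
multiple of `x`. If `x'` has the same Heisenberg bispectrum as `x`, then
`x'_j = λ·ζ^{n₀j}·x_{j+k₀}` for some `|λ| = 1` and `k₀, n₀ ∈ ℤ_N`. -/
theorem heisenberg_bispectrum_separates_up_to_phase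
    {N : ℕ} [NeZero N] (x : ZMod N → ℂ)
    (hy : ∀ k : ZMod N, dft (fun t => ((‖x t‖ : ℂ)) ^ 2) k ≠ 0)
    (hz : ∀ k : ZMod N, dft (fun t => ((‖dft x t‖ : ℂ)) ^ 2) k ≠ 0)
    (hPR : ∀ u : ZMod N → ℂ,
      (∀ j : ZMod N, ‖u j‖ = ‖x j‖) →
      (∀ k : ZMod N, ‖dft u k‖ = ‖dft x k‖) →
      ∃ lam : ℂ, ‖lam‖ = 1 ∧ u = fun j => lam * x j)
    (x' : ZMod N → ℂ)
    (hBM : ∀ i j : ZMod N, modulusBispectrum x' i j = modulusBispectrum x i j)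
    (hBFM : ∀ i j : ZMod N, fourierModulusBispectrum x' i j = fourierModulusBispectrum x i j) :
    ∃ (lam : ℂ) (k₀ n₀ : ZMod N), ‖lam‖ = 1 ∧
      ∀ j : ZMod N, x' j = lam * heisZeta N ^ (n₀ * j).val * x (j + k₀) := by
  obtain ⟨k₀, hk₀⟩ := exists_norm_eq_comp_add_of_bispectrum_eq hy (funext₂ hBM)
  obtain ⟨m₀, hm₀⟩ := exists_norm_eq_comp_add_of_bispectrum_eq hz (funext₂ hBFM)
  obtain ⟨lam, hlam, hu⟩ := hPR (heisTranslate (-k₀) m₀ x')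
    (fun j => by rw [norm_heisTranslate_apply, hk₀, neg_add_cancel_right])
    (fun k => by rw [norm_dft_heisTranslate, hm₀, sub_add_cancel])
  have hx' := congrArg (heisTranslate k₀ (-m₀)) hu
  rw [heisTranslate_heisTranslate_neg] at hx'
  refine ⟨lam * stdAddChar (-(m₀ * k₀)), k₀, -m₀,
    by rw [norm_mul, hlam, norm_stdAddChar, one_mul], fun j => ?_⟩
  have hj : stdAddChar (m₀ * k₀) * x' j = stdAddChar (-m₀ * j) * (lam * x (j + k₀)) :=
    congrFun hx' j
  have hinv : stdAddChar (-(m₀ * k₀)) * stdAddChar (m₀ * k₀) = 1 := by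
    rw [← AddChar.map_add_eq_mul, neg_add_cancel, AddChar.map_zero_eq_one]
  rw [← stdAddChar_eq_heisZeta_pow_val]
  linear_combination stdAddChar (-(m₀ * k₀)) * hj - x' j * hinv
end
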